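/- For every n ≥ 1, the total number of polynomials over ℕ with zero constant term having (ordinary) complexity at most n is at least 2^n − 1; that is, Σ_{i=1}^{n} |K_i| ≥ 2^n − 1. -/

import Mathlib

open Polynomial

/-- Expressions built from a single symbol `x` using addition and multiplication. -/
inductive Expr where
  | x : Expr
  | add : Expr → Expr → Expr
  | mul : Expr → Expr → Expr

/-- The size of an expression: the number of occurrences of `x`. -/
def Expr.size : Expr → ℕ
  | .x => 1
  | .add a b => a.size + b.size
  | .mul a b => a.size + b.size

/-- Evaluate an expression, sending the symbol `x` to `z`. -/
def Expr.eval {R : Type*} [Add R] [Mul R] (z : R) : Expr → R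
  | .x => z
  | .add a b => a.eval z + b.eval z
  | .mul a b => a.eval z * b.eval z

/-- The complexity of a polynomial `f ∈ ℕ[X]`: the least number of `x`'s in an
expression evaluating to `f` at `x = X`. -/
noncomputable def polyComplexity (f : Polynomial ℕ) : ℕ :=
  sInf {m | ∃ e : Expr, e.size = m ∧ e.eval (Polynomial.X : Polynomial ℕ) = f}

/-- The `n`-th complexity class: polynomials over `ℕ` (expressible, hence with zero
constant term) whose complexity is exactly `n`. -/
noncomputable def K (n : ℕ) : Set (Polynomial ℕ) :=
  {f | (∃ e : Expr, e.eval (Polynomial.X : Polynomial ℕ) = f) ∧ polyComplexity f = n}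

/-! ### Auxiliary material -/

deriving instance DecidableEq for Expr

lemma Expr.one_le_size (e : Expr) : 1 ≤ e.size := by
  induction e <;> simp [Expr.size] <;> omega

/-- All expressions of size at most `n`. -/
def allExprs : ℕ → Finset Expr
  | 0 => ∅
  | n+1 => insert Expr.x
      ((((allExprs n) ×ˢ (allExprs n)).image fun p => Expr.add p.1 p.2) ∪
       (((allExprs n) ×ˢ (allExprs n)).image fun p => Expr.mul p.1 p.2))

lemma mem_allExprs : ∀ (e : Expr) (n : ℕ), e.size ≤ n → e ∈ allExprs n := by
  intro e
  induction e with
  | x =>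
      intro n hn
      match n with
      | 0 => simp [Expr.size] at hn
      | n+1 => simp [allExprs]
  | add a b ha hb =>
      intro n hn
      match n with
      | 0 => have := a.one_le_size; simp [Expr.size] at hn; omega
      | n+1 =>
          have h1 := a.one_le_size; have h2 := b.one_le_size
          simp only [Expr.size] at hn
          have hA : a.size ≤ n := by omega
          have hB : b.size ≤ n := by omega
          simp only [allExprs, Finset.mem_insert, Finset.mem_union, Finset.mem_image]
          exact Or.inr (Or.inl ⟨(a, b), Finset.mem_product.2 ⟨ha n hA, hb n hB⟩, rfl⟩)
  | mul a b ha hb =>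
      intro n hn
      match n with
      | 0 => have := a.one_le_size; simp [Expr.size] at hn; omega
      | n+1 =>
          have h1 := a.one_le_size; have h2 := b.one_le_size
          simp only [Expr.size] at hn
          have hA : a.size ≤ n := by omega
          have hB : b.size ≤ n := by omega
          simp only [allExprs, Finset.mem_insert, Finset.mem_union, Finset.mem_image]
          exact Or.inr (Or.inr ⟨(a, b), Finset.mem_product.2 ⟨ha n hA, hb n hB⟩, rfl⟩)

lemma K_subset (i : ℕ) :
    K i ⊆ (fun e : Expr => e.eval (Polynomial.X : Polynomial ℕ)) '' ↑(allExprs i) := by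
  rintro f ⟨⟨e₀, he₀⟩, hc⟩
  have hne : {m | ∃ e : Expr, e.size = m ∧ e.eval (Polynomial.X : Polynomial ℕ) = f}.Nonempty :=
    ⟨e₀.size, e₀, rfl, he₀⟩
  obtain ⟨e, hs, he⟩ := Nat.sInf_mem hne
  refine ⟨e, ?_, he⟩
  exact mem_allExprs e i (le_of_eq (by rw [hs, ← polyComplexity, hc]))

lemma K_finite (i : ℕ) : (K i).Finite :=
  Set.Finite.subset (Set.Finite.image _ (allExprs i).finite_toSet) (K_subset i)

/-- The expression encoded by the binary digits of `m` (for `m ≥ 1`):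
bit `0` means "multiply by x", bit `1` means "add x". -/
def te (m : ℕ) : Expr :=
  if h : m < 2 then Expr.x
  else if m % 2 = 0 then Expr.mul (te (m / 2)) Expr.x
  else Expr.add (te (m / 2)) Expr.x
decreasing_by all_goals { simp at h; omega }

/-- The polynomial encoded by `m`. -/
noncomputable def tf (m : ℕ) : Polynomial ℕ := (te m).eval Polynomial.X

lemma tf_one : tf 1 = Polynomial.X := by
  rw [tf, te]; norm_num [Expr.eval]

lemma tf_even {m : ℕ} (h2 : 2 ≤ m) (he : m % 2 = 0) : tf m = tf (m / 2) * Polynomial.X := by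
  rw [tf, te]; rw [dif_neg (by omega), if_pos he]; rfl

lemma tf_odd {m : ℕ} (h2 : 2 ≤ m) (he : m % 2 = 1) : tf m = tf (m / 2) + Polynomial.X := by
  rw [tf, te]; rw [dif_neg (by omega), if_neg (by omega)]; rfl

lemma tf_coeff_zero (m : ℕ) : (tf m).coeff 0 = 0 ∧ tf m ≠ 0 := by
  induction m using Nat.strong_induction_on with
  | _ m ih =>
    rcases lt_or_ge m 2 with h | h
    · rw [tf, te, dif_pos h]
      simp [Expr.eval, Polynomial.coeff_X_zero, Polynomial.X_ne_zero]
    · have hrec := ih (m / 2) (by omega)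
      rcases Nat.even_or_odd m with he | ho
      · rw [tf_even h (Nat.even_iff.mp he)]
        constructor
        · simp [Polynomial.coeff_mul_X_zero]
        · exact mul_ne_zero hrec.2 Polynomial.X_ne_zero
      · rw [tf_odd h (Nat.odd_iff.mp ho)]
        constructor
        · simp [Polynomial.coeff_add, hrec.1, Polynomial.coeff_X_zero]
        · intro hc
          have := congrArg (fun p => Polynomial.coeff p 1) hc
          simp [Polynomial.coeff_add, Polynomial.coeff_X_one] at this

lemma tf_coeff_one_even {m : ℕ} (h2 : 2 ≤ m) (he : m % 2 = 0) : (tf m).coeff 1 = 0 := by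
  rw [tf_even h2 he]
  simpa [Polynomial.coeff_mul_X] using (tf_coeff_zero (m / 2)).1

lemma tf_coeff_one_pos {m : ℕ} (h1 : 1 ≤ m) (he : m % 2 = 1) : 1 ≤ (tf m).coeff 1 := by
  rcases lt_or_ge m 2 with h | h
  · have hm : m = 1 := by omega
    subst hm; simp [tf_one]
  · rw [tf_odd h he]
    simp [Polynomial.coeff_add, Polynomial.coeff_X_one]

lemma tf_injOn : ∀ m₁, 1 ≤ m₁ → ∀ m₂, 1 ≤ m₂ → tf m₁ = tf m₂ → m₁ = m₂ := by
  intro m₁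
  induction m₁ using Nat.strong_induction_on with
  | _ m₁ ih =>
    intro h1 m₂ h2 heq
    rcases Nat.even_or_odd m₁ with he₁ | ho₁ <;> rcases Nat.even_or_odd m₂ with he₂ | ho₂
    · -- both even
      have e1 := Nat.even_iff.mp he₁; have e2 := Nat.even_iff.mp he₂
      have g1 : 2 ≤ m₁ := by omega
      have g2 : 2 ≤ m₂ := by omega
      rw [tf_even g1 e1, tf_even g2 e2] at heq
      have hh : tf (m₁ / 2) = tf (m₂ / 2) := by
        ext k
        have := congrArg (fun r => Polynomial.coeff r (k + 1)) heq
        simpa [Polynomial.coeff_mul_X] using this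
      have := ih (m₁ / 2) (by omega) (by omega) (m₂ / 2) (by omega) hh
      omega
    · -- m₁ even, m₂ odd
      have e1 := Nat.even_iff.mp he₁; have e2 := Nat.odd_iff.mp ho₂
      have g1 : 2 ≤ m₁ := by omega
      have c1 := tf_coeff_one_even g1 e1
      have c2 := tf_coeff_one_pos h2 e2
      rw [heq] at c1; omega
    · -- m₁ odd, m₂ even
      have e1 := Nat.odd_iff.mp ho₁; have e2 := Nat.even_iff.mp he₂
      have g2 : 2 ≤ m₂ := by omega
      have c1 := tf_coeff_one_pos h1 e1
      have c2 := tf_coeff_one_even g2 e2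
      rw [heq] at c1; omega
    · -- both odd
      have e1 := Nat.odd_iff.mp ho₁; have e2 := Nat.odd_iff.mp ho₂
      rcases lt_or_ge m₁ 2 with l1 | g1 <;> rcases lt_or_ge m₂ 2 with l2 | g2
      · omega
      · exfalso
        have hm1 : m₁ = 1 := by omega
        subst hm1
        rw [tf_one, tf_odd g2 e2] at heq
        have hz : tf (m₂ / 2) = 0 := by
          ext k
          have h := congrArg (fun r => Polynomial.coeff r k) heq
          simp only [Polynomial.coeff_add] at h
          simp only [Polynomial.coeff_zero]
          omega
        exact (tf_coeff_zero (m₂ / 2)).2 hz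
      · exfalso
        have hm2 : m₂ = 1 := by omega
        subst hm2
        rw [tf_odd g1 e1, tf_one] at heq
        have hz : tf (m₁ / 2) = 0 := by
          ext k
          have h := congrArg (fun r => Polynomial.coeff r k) heq
          simp only [Polynomial.coeff_add] at h
          simp only [Polynomial.coeff_zero]
          omega
        exact (tf_coeff_zero (m₁ / 2)).2 hz
      · rw [tf_odd g1 e1, tf_odd g2 e2] at heq
        have hh : tf (m₁ / 2) = tf (m₂ / 2) := by
          ext k
          have h := congrArg (fun r => Polynomial.coeff r k) heq
          simp only [Polynomial.coeff_add] at h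
          omega
        have := ih (m₁ / 2) (by omega) (by omega) (m₂ / 2) (by omega) hh
        omega

lemma te_size_le : ∀ n m, 1 ≤ m → m < 2 ^ n → (te m).size ≤ n := by
  intro n
  induction n with
  | zero => intro m h1 h2; omega
  | succ n ih =>
      intro m h1 h2
      rcases lt_or_ge m 2 with h | h
      · rw [te, dif_pos h]; simp [Expr.size]
      · have hrec : (te (m / 2)).size ≤ n := by
          apply ih (m / 2) (by omega)
          have : m < 2 ^ n * 2 := by rw [pow_succ] at h2; omega
          omega
        rw [te, dif_neg (by omega)]
        rcases Nat.even_or_odd m with he | ho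
        · rw [if_pos (Nat.even_iff.mp he)]; simp [Expr.size]; exact hrec
        · rw [if_neg (by have := Nat.odd_iff.mp ho; omega)]; simp [Expr.size]; exact hrec

lemma te_eval (m : ℕ) : (te m).eval (Polynomial.X : Polynomial ℕ) = tf m := rfl

lemma tf_mem_K {n m : ℕ} (h1 : 1 ≤ m) (h2 : m < 2 ^ n) :
    tf m ∈ ⋃ i ∈ Finset.Icc 1 n, K i := by
  have hne : {k | ∃ e : Expr, e.size = k ∧ e.eval (Polynomial.X : Polynomial ℕ) = tf m}.Nonempty :=
    ⟨(te m).size, te m, rfl, te_eval m⟩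
  obtain ⟨e, hs, he⟩ := Nat.sInf_mem hne
  have hc1 : 1 ≤ polyComplexity (tf m) := by
    rw [polyComplexity, ← hs]; exact e.one_le_size
  have hcn : polyComplexity (tf m) ≤ n :=
    le_trans (Nat.sInf_le ⟨te m, rfl, te_eval m⟩) (te_size_le n m h1 h2)
  exact Set.mem_biUnion (Finset.mem_Icc.mpr ⟨hc1, hcn⟩) ⟨⟨te m, te_eval m⟩, rfl⟩

theorem cumulative_complexity_class_lower_bound (n : ℕ) (hn : 1 ≤ n) :
    2 ^ n - 1 ≤ ∑ i ∈ Finset.Icc 1 n, (K i).ncard := by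
  classical
  set S : Set (Polynomial ℕ) := tf '' Set.Ico 1 (2 ^ n) with hS
  have hScard : S.ncard = 2 ^ n - 1 := by
    rw [hS, Set.ncard_image_of_injOn (fun a ha b hb h => tf_injOn a ha.1 b hb.1 h)]
    rw [← Nat.card_Ico 1 (2 ^ n), ← Set.ncard_coe_finset]
    congr 1; ext; simp
  have hsub : S ⊆ ⋃ i ∈ Finset.Icc 1 n, K i := by
    rintro f ⟨m, ⟨h1, h2⟩, rfl⟩
    exact tf_mem_K h1 h2
  have hUfin : (⋃ i ∈ Finset.Icc 1 n, K i).Finite :=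
    Set.Finite.biUnion (Finset.Icc 1 n).finite_toSet (fun i _ => K_finite i)
  have hU : (⋃ i ∈ Finset.Icc 1 n, K i) =
      ↑((Finset.Icc 1 n).biUnion fun i => (K_finite i).toFinset) := by
    ext f; simp [Set.Finite.mem_toFinset]
  calc 2 ^ n - 1 = S.ncard := hScard.symm
    _ ≤ (⋃ i ∈ Finset.Icc 1 n, K i).ncard := Set.ncard_le_ncard hsub hUfin
    _ ≤ ∑ i ∈ Finset.Icc 1 n, (K i).ncard := by
        rw [hU, Set.ncard_coe_finset]
        refine le_trans Finset.card_biUnion_le (Finset.sum_le_sum fun i _ => ?_)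
        exact le_of_eq (Set.ncard_eq_toFinset_card (K i) (K_finite i)).symm
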